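/- arXiv:1902.10351 — 3 statements merged into one kernel-verified Lean document; each statement's English description precedes it below -/
import Mathlib

section
/- In any digraph G containing the crown subgraph C_n with the labelled incoming and outgoing edges, for each label i there is at most one directed Hamiltonian path through C_n from the entry vertex of incoming edge i to the exit vertex of outgoing edge i that visits all vertices of C_n. -/
/-- The directed edge set of the crown subgraph `C_n`. -/
def crownEdges (n : ℕ) : Finset (ℕ × ℕ) :=
  ((Finset.Icc 1 (5*n-11)).image (fun i => (i, i+1))) ∪
  ((Finset.Icc 1 (5*n-11)).image (fun i => (i+1, i))) ∪
  {(1, 5*n-10), (5*n-10, 1), (2*n, 2*n-2), (5*n-10, 2)} ∪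
  ((Finset.Icc 1 ((n-3)/2)).image (fun i => (2*n+3*i, 2*n-2-2*i))) ∪
  ((Finset.Icc 1 ((n-4)/2)).image (fun i => (5*n-10-3*i, 2*i+2)))

/-- `outLabelRel n a i` says that the outgoing edge of the crown subgraph `C_n`
departing from vertex `a` carries the label `i`: label `1` from vertex `5n-10`, label
`2` from vertex `1`, label `n-1` from vertex `2n-1`, label `n` from vertex `2n`, label
`j+2` from vertex `5n-9-3j` for `1 ≤ j ≤ ⌊(n-4)/2⌋`, and label `n-1-j` from vertex
`2n-1+3j` for `1 ≤ j ≤ ⌈(n-4)/2⌉` (note `⌈(n-4)/2⌉ = (n-3)/2` in ℕ). -/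
def outLabelRel (n a i : ℕ) : Prop :=
  (i = 1 ∧ a = 5*n-10) ∨ (i = 2 ∧ a = 1) ∨ (i = n-1 ∧ a = 2*n-1) ∨ (i = n ∧ a = 2*n) ∨
  (∃ j, 1 ≤ j ∧ j ≤ (n-4)/2 ∧ i = j+2 ∧ a = 5*n-9-3*j) ∨
  (∃ j, 1 ≤ j ∧ j ≤ (n-3)/2 ∧ i = n-1-j ∧ a = 2*n-1+3*j)

/-- `IsCrownHamPath n s t l` says that the list `l` is a directed Hamiltonian path in
the crown subgraph `C_n` from vertex `s` to vertex `t`: its consecutive pairs are arcs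
of `C_n` and it visits each of the vertices `1, ..., 5n-10` exactly once. -/
def IsCrownHamPath (n s t : ℕ) (l : List ℕ) : Prop :=
  l.Chain' (fun a b => (a, b) ∈ crownEdges n) ∧ l.head? = some s ∧
  l.getLast? = some t ∧ l.Nodup ∧ ∀ x, x ∈ l ↔ x ∈ Finset.Icc 1 (5*n-10)

namespace CrownUnique

def IsChord (n a b : ℕ) : Prop :=
  (a = 2*n ∧ b = 2*n-2) ∨ (a = 5*n-10 ∧ b = 2) ∨
  (∃ j, 1 ≤ j ∧ j ≤ (n-3)/2 ∧ a = 2*n+3*j ∧ b = 2*n-2-2*j) ∨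
  (∃ j, 1 ≤ j ∧ j ≤ (n-4)/2 ∧ a = 5*n-10-3*j ∧ b = 2*j+2)

lemma edge_cases {n a b : ℕ} (h : (a, b) ∈ crownEdges n) :
    (1 ≤ a ∧ a ≤ 5*n-11 ∧ b = a + 1) ∨ (1 ≤ b ∧ b ≤ 5*n-11 ∧ a = b + 1) ∨
    (a = 1 ∧ b = 5*n-10) ∨ (a = 5*n-10 ∧ b = 1) ∨ IsChord n a b := by
  simp only [crownEdges, Finset.mem_union, Finset.mem_image, Finset.mem_Icc,
    Finset.mem_insert, Finset.mem_singleton, Prod.mk.injEq] at h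
  rcases h with ((((⟨x, hx, hxa, hxb⟩|⟨x, hx, hxa, hxb⟩)|(h|h|h|h))|⟨x, hx, hxa, hxb⟩)|⟨x, hx, hxa, hxb⟩)
  · left; omega
  · right; left; omega
  · right; right; left; omega
  · right; right; right; left; omega
  · right; right; right; right; left; omega
  · right; right; right; right; right; left; omega
  · right; right; right; right; right; right; left; exact ⟨x, hx.1, hx.2, hxa.symm, hxb.symm⟩
  · right; right; right; right; right; right; right; exact ⟨x, hx.1, hx.2, hxa.symm, hxb.symm⟩
lemma chord_bounds {n a b : ℕ} (hn : 4 ≤ n) (h : IsChord n a b) :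
    2*n ≤ a ∧ a ≤ 5*n-10 ∧ 2 ≤ b ∧ b ≤ 2*n-2 ∧ 2 ∣ b := by
  rcases h with ⟨ha, hb⟩ | ⟨ha, hb⟩ | ⟨j, h1, h2, ha, hb⟩ | ⟨j, h1, h2, ha, hb⟩ <;>
    subst ha <;> subst hb <;>
    refine ⟨by omega, by omega, by omega, by omega, ?_⟩ <;> omega

lemma chord_src_top {n b : ℕ} (hn : 4 ≤ n) (h : IsChord n (5*n-10) b) : b = 2 := by
  rcases h with ⟨ha, hb⟩ | ⟨ha, hb⟩ | ⟨j, h1, h2, ha, hb⟩ | ⟨j, h1, h2, ha, hb⟩ <;> omega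

lemma chord_ne_succ {n a b : ℕ} (hn : 4 ≤ n) (h : IsChord n a b) : b ≠ a + 1 := by
  rcases h with ⟨ha, hb⟩ | ⟨ha, hb⟩ | ⟨j, h1, h2, ha, hb⟩ | ⟨j, h1, h2, ha, hb⟩ <;> omega

/-- discrete IVT for a predicate on ℕ. -/
lemma ivt {S : ℕ → Prop} {a b : ℕ} (hab : a ≤ b) (ha : ¬ S a) (hb : S b) :
    ∃ j, a ≤ j ∧ j < b ∧ ¬ S j ∧ S (j+1) := by
  by_contra h
  push_neg at h
  have key : ∀ m, a + m ≤ b → ¬ S (a + m) := by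
    intro m
    induction m with
    | zero => intro _; simpa using ha
    | succ m ih =>
      intro hm
      have h1 := ih (by omega)
      have h2 := h (a+m) (by omega) (by omega) h1
      exact h2
  have := key (b - a) (by omega)
  rw [Nat.add_sub_cancel' hab] at this
  exact this hb

/-- a jump-free stretch of the path is monotone. -/
lemma run_of_smooth (f : ℕ → ℕ) (N a b : ℕ)
    (Hinj : ∀ k l, k < N → l < N → f k = f l → k = l)
    (hb : b < N) (hab : a ≤ b)
    (hsm : ∀ j, a ≤ j → j < b → f (j+1) = f j + 1 ∨ f j = f (j+1) + 1) :
    (∀ k, a ≤ k → k ≤ b → f k + a = f a + k) ∨ (∀ k, a ≤ k → k ≤ b → f k + k = f a + a) := by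
  rcases Nat.eq_or_lt_of_le hab with rfl | hlt
  · left
    intro k h1 h2
    have hk : k = a := by omega
    subst hk; rfl
  · rcases hsm a le_rfl hlt with hup | hdown
    · left
      have key : ∀ m, a + m ≤ b → f (a + m) = f a + m ∧ (a + m < b → f (a+m+1) = f (a+m) + 1) := by
        intro m
        induction m with
        | zero =>
          intro _
          constructor
          · simp
          · intro _; simpa using hup
        | succ m ih =>
          intro hm
          obtain ⟨hv, hs⟩ := ih (by omega)
          have hstep := hs (by omega)
          show f (a+m+1) = f a + (m+1) ∧ (a+m+1 < b → f (a+m+1+1) = f (a+m+1) + 1)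
          refine ⟨by omega, ?_⟩
          intro hlt2
          rcases hsm (a+m+1) (by omega) hlt2 with h | h
          · exact h
          · exfalso
            have : f (a+m+1+1) = f (a+m) := by omega
            have := Hinj _ _ (by omega) (by omega) this
            omega
      intro k h1 h2
      have hk := (key (k - a) (by omega)).1
      rw [Nat.add_sub_cancel' h1] at hk
      omega
    · right
      have key : ∀ m, a + m ≤ b → (f (a + m) + m = f a ∧ (a + m < b → f (a+m) = f (a+m+1) + 1)) := by
        intro m
        induction m with
        | zero =>
          intro _
          constructor
          · simp
          · intro _; simpa using hdown
        | succ m ih =>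
          intro hm
          obtain ⟨hv, hs⟩ := ih (by omega)
          have hstep := hs (by omega)
          show f (a+m+1) + (m+1) = f a ∧ (a+m+1 < b → f (a+m+1) = f (a+m+1+1) + 1)
          refine ⟨by omega, ?_⟩
          intro hlt2
          rcases hsm (a+m+1) (by omega) hlt2 with h | h
          · exfalso
            have : f (a+m+1+1) = f (a+m) := by omega
            have := Hinj _ _ (by omega) (by omega) this
            omega
          · exact h
      intro k h1 h2
      have hk := (key (k - a) (by omega)).1
      rw [Nat.add_sub_cancel' h1] at hk
      omega


section LabelLemmas

variable {n i t : ℕ}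

private lemma ht' (ht : outLabelRel n t i) :
    (i = 1 ∧ t = 5*n-10) ∨ (i = 2 ∧ t = 1) ∨ (i = n-1 ∧ t = 2*n-1) ∨ (i = n ∧ t = 2*n) ∨
    (∃ j, 1 ≤ j ∧ j ≤ (n-4)/2 ∧ i = j+2 ∧ t = 5*n-9-3*j) ∨
    (∃ j, 1 ≤ j ∧ j ≤ (n-3)/2 ∧ i = n-1-j ∧ t = 2*n-1+3*j) := ht

lemma lab_low (hn : 4 ≤ n) (hi1 : 1 ≤ i) (hi2 : i ≤ n) (ht : outLabelRel n t i)
    (h : t ≤ 2*n-1) : t = 1 ∨ t = 2*n-1 := by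
  rcases ht' ht with ⟨h1,h2⟩|⟨h1,h2⟩|⟨h1,h2⟩|⟨h1,h2⟩|⟨j,hj1,hj2,hj3,hj4⟩|⟨j,hj1,hj2,hj3,hj4⟩ <;> omega

lemma lab_2i (hn : 4 ≤ n) (hi1 : 1 ≤ i) (hi2 : i ≤ n) (ht : outLabelRel n t i)
    (h : t = 2*i) : i = n := by
  rcases ht' ht with ⟨h1,h2⟩|⟨h1,h2⟩|⟨h1,h2⟩|⟨h1,h2⟩|⟨j,hj1,hj2,hj3,hj4⟩|⟨j,hj1,hj2,hj3,hj4⟩ <;> omega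

lemma lab_2i2 (hn : 4 ≤ n) (hi1 : 1 ≤ i) (hi2 : i ≤ n) (ht : outLabelRel n t i)
    (h : t = 2*i-2) : False := by
  rcases ht' ht with ⟨h1,h2⟩|⟨h1,h2⟩|⟨h1,h2⟩|⟨h1,h2⟩|⟨j,hj1,hj2,hj3,hj4⟩|⟨j,hj1,hj2,hj3,hj4⟩ <;> omega

lemma lab_N (hn : 4 ≤ n) (hi1 : 1 ≤ i) (hi2 : i ≤ n) (ht : outLabelRel n t i)
    (h : t = 5*n-10) : i = 1 := by
  rcases ht' ht with ⟨h1,h2⟩|⟨h1,h2⟩|⟨h1,h2⟩|⟨h1,h2⟩|⟨j,hj1,hj2,hj3,hj4⟩|⟨j,hj1,hj2,hj3,hj4⟩ <;> omega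

lemma lab_chord_up {u : ℕ} (hn : 4 ≤ n) (hi1 : 1 ≤ i) (hi2 : i ≤ n) (ht : outLabelRel n t i)
    (hch : IsChord n u (2*i)) (htu : t + 1 = u) :
    u = 5*n-3-3*i ∧ 2 + (n-4)/2 < i ∧ 3 ≤ i ∧ i ≤ n-1 := by
  rcases ht' ht with ⟨h1,h2⟩|⟨h1,h2⟩|⟨h1,h2⟩|⟨h1,h2⟩|⟨j,hj1,hj2,hj3,hj4⟩|⟨j,hj1,hj2,hj3,hj4⟩ <;>
    rcases hch with ⟨ha, hb⟩ | ⟨ha, hb⟩ | ⟨j', hc1, hc2, ha, hb⟩ | ⟨j', hc1, hc2, ha, hb⟩ <;> omega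

lemma lab_chord_down {u : ℕ} (hn : 4 ≤ n) (hi1 : 1 ≤ i) (hi2 : i ≤ n) (ht : outLabelRel n t i)
    (hch : IsChord n u (2*i-2)) (htu : t = u + 1) (htN : t ≤ 5*n-10) :
    u = 5*n-4-3*i ∧ 3 ≤ i ∧ i ≤ 2 + (n-4)/2 := by
  rcases ht' ht with ⟨h1,h2⟩|⟨h1,h2⟩|⟨h1,h2⟩|⟨h1,h2⟩|⟨j,hj1,hj2,hj3,hj4⟩|⟨j,hj1,hj2,hj3,hj4⟩ <;>
    rcases hch with ⟨ha, hb⟩ | ⟨ha, hb⟩ | ⟨j', hc1, hc2, ha, hb⟩ | ⟨j', hc1, hc2, ha, hb⟩ <;> omega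

end LabelLemmas

section Path

variable {n i t : ℕ} {f : ℕ → ℕ}

lemma step_cases (hn : 4 ≤ n)
    (HE : ∀ k, k + 2 ≤ 5*n-10 → (f k, f (k+1)) ∈ crownEdges n)
    (k : ℕ) (hk : k + 2 ≤ 5*n-10) :
    (f (k+1) = f k + 1 ∨ f k = f (k+1) + 1) ∨
    (f k = 1 ∧ f (k+1) = 5*n-10) ∨ (f k = 5*n-10 ∧ f (k+1) = 1) ∨
    IsChord n (f k) (f (k+1)) := by
  rcases edge_cases (HE k hk) with h|h|h|h|h
  · exact Or.inl (Or.inl h.2.2)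
  · exact Or.inl (Or.inr h.2.2)
  · exact Or.inr (Or.inl h)
  · exact Or.inr (Or.inr (Or.inl h))
  · exact Or.inr (Or.inr (Or.inr h))

lemma up_char (hn : 4 ≤ n)
    (HE : ∀ k, k + 2 ≤ 5*n-10 → (f k, f (k+1)) ∈ crownEdges n)
    (k : ℕ) (hk : k + 2 ≤ 5*n-10) (hlo : f k < 2*n) (hhi : 2*n ≤ f (k+1)) :
    (f k = 2*n-1 ∧ f (k+1) = 2*n) ∨ (f k = 1 ∧ f (k+1) = 5*n-10) := by
  rcases step_cases hn HE k hk with (h|h)|h|h|h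
  · left; omega
  · exfalso; omega
  · right; exact h
  · exfalso; omega
  · exfalso; have := chord_bounds hn h; omega

lemma wrap_unique (hn : 4 ≤ n)
    (Hinj : ∀ k l, k < 5*n-10 → l < 5*n-10 → f k = f l → k = l)
    {k k' : ℕ} (hk : k + 2 ≤ 5*n-10) (hk' : k' + 2 ≤ 5*n-10)
    (hw : f k = 1 ∧ f (k+1) = 5*n-10 ∨ f k = 5*n-10 ∧ f (k+1) = 1)
    (hw' : f k' = 1 ∧ f (k'+1) = 5*n-10 ∨ f k' = 5*n-10 ∧ f (k'+1) = 1) : k = k' := by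
  rcases hw with ⟨h1,h2⟩|⟨h1,h2⟩ <;> rcases hw' with ⟨h1',h2'⟩|⟨h1',h2'⟩
  · exact Hinj k k' (by omega) (by omega) (by omega)
  · have e1 := Hinj k (k'+1) (by omega) (by omega) (by omega)
    have e2 := Hinj (k+1) k' (by omega) (by omega) (by omega)
    omega
  · have e1 := Hinj k (k'+1) (by omega) (by omega) (by omega)
    have e2 := Hinj (k+1) k' (by omega) (by omega) (by omega)
    omega
  · exact Hinj k k' (by omega) (by omega) (by omega)

lemma chord_unique (hn : 4 ≤ n) (hi1 : 1 ≤ i) (hi2 : i ≤ n) (ht : outLabelRel n t i)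
    (HE : ∀ k, k + 2 ≤ 5*n-10 → (f k, f (k+1)) ∈ crownEdges n)
    (Hinj : ∀ k l, k < 5*n-10 → l < 5*n-10 → f k = f l → k = l)
    (Hs : f 0 = 2*i-1) (Ht : f (5*n-11) = t)
    {k k' : ℕ} (hk : k + 2 ≤ 5*n-10) (hk' : k' + 2 ≤ 5*n-10)
    (hc : IsChord n (f k) (f (k+1))) (hc' : IsChord n (f k') (f (k'+1))) : k = k' := by
  have main : ∀ a b, a + 2 ≤ 5*n-10 → b + 2 ≤ 5*n-10 → IsChord n (f a) (f (a+1)) →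
      IsChord n (f b) (f (b+1)) → a < b → False := by
    intro a b ha hb hca hcb hab
    obtain ⟨ha1, ha2, ha3, ha4, -⟩ := chord_bounds hn hca
    obtain ⟨hb1, hb2, hb3, hb4, -⟩ := chord_bounds hn hcb
    obtain ⟨j1, hj1a, hj1b, hj1c, hj1d⟩ :=
      ivt (S := fun m => 2*n ≤ f m) (Nat.zero_le a) (by omega) (by omega)
    obtain ⟨j2, hj2a, hj2b, hj2c, hj2d⟩ :=
      ivt (S := fun m => 2*n ≤ f m) (show a+1 ≤ b from hab) (by omega) (by omega)
    have c1 := up_char hn HE j1 (by omega) (by omega) hj1d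
    have c2 := up_char hn HE j2 (by omega) (by omega) hj2d
    by_cases htU : 2*n ≤ t
    · obtain ⟨j3, hj3a, hj3b, hj3c, hj3d⟩ :=
        ivt (S := fun m => 2*n ≤ f m) (show b+1 ≤ 5*n-11 by omega) (by omega)
          (by omega)
      skip
      have c3 := up_char hn HE j3 (by omega) (by omega) hj3d
      rcases c1 with ⟨e1,e1'⟩|⟨e1,e1'⟩ <;> rcases c2 with ⟨e2,e2'⟩|⟨e2,e2'⟩ <;>
        rcases c3 with ⟨e3,e3'⟩|⟨e3,e3'⟩ <;>
      first
      | (have := Hinj j1 j2 (by omega) (by omega) (by omega); omega)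
      | (have := Hinj j1 j3 (by omega) (by omega) (by omega); omega)
      | (have := Hinj j2 j3 (by omega) (by omega) (by omega); omega)
    · have hlow := lab_low hn hi1 hi2 ht (by omega)
      rcases c1 with ⟨e1,e1'⟩|⟨e1,e1'⟩ <;> rcases c2 with ⟨e2,e2'⟩|⟨e2,e2'⟩
      · have := Hinj j1 j2 (by omega) (by omega) (by omega); omega
      · rcases hlow with rfl|rfl
        · have := Hinj j2 (5*n-11) (by omega) (by omega) (by omega); omega
        · have := Hinj j1 (5*n-11) (by omega) (by omega) (by omega); omega
      · rcases hlow with rfl|rfl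
        · have := Hinj j1 (5*n-11) (by omega) (by omega) (by omega); omega
        · have := Hinj j2 (5*n-11) (by omega) (by omega) (by omega); omega
      · have := Hinj j1 j2 (by omega) (by omega) (by omega); omega
  rcases Nat.lt_trichotomy k k' with h|h|h
  · exact (main k k' hk hk' hc hc' h).elim
  · exact h
  · exact (main k' k hk' hk hc' hc h).elim

end Path

def canon (n i k : ℕ) : ℕ :=
  if i = 1 then k + 1
  else if i = 2 then (if k ≤ 5*n-13 then k + 3 else 5*n-10-k)
  else if i ≤ 2 + (n-4)/2 then
    (if k ≤ 5*n-3-5*i then 2*i-1+k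
     else if k ≤ 5*n-5-3*i then 5*n-4-3*i-k
     else 10*n-14-3*i-k)
  else
    (if k ≤ 2*i-2 then 2*i-1-k
     else if k ≤ 5*i-8 then 5*n-11+2*i-k
     else k+7-3*i)

theorem path_canon (n i t : ℕ) (f : ℕ → ℕ)
    (hn : 4 ≤ n) (hi1 : 1 ≤ i) (hi2 : i ≤ n) (ht : outLabelRel n t i)
    (HE : ∀ k, k + 2 ≤ 5*n-10 → (f k, f (k+1)) ∈ crownEdges n)
    (Hinj : ∀ k l, k < 5*n-10 → l < 5*n-10 → f k = f l → k = l)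
    (Hsurj : ∀ v, 1 ≤ v → v ≤ 5*n-10 → ∃ k, k < 5*n-10 ∧ f k = v)
    (Hrange : ∀ k, k < 5*n-10 → 1 ≤ f k ∧ f k ≤ 5*n-10)
    (Hs : f 0 = 2*i-1) (Ht : f (5*n-11) = t) :
    ∀ k, k < 5*n-10 → f k = canon n i k := by
  by_cases hC : ∃ k, k + 2 ≤ 5*n-10 ∧ IsChord n (f k) (f (k+1))
  · by_cases hW : ∃ k, k + 2 ≤ 5*n-10 ∧
        (f k = 1 ∧ f (k+1) = 5*n-10 ∨ f k = 5*n-10 ∧ f (k+1) = 1)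
    · -- Case D : one chord, one wrap
      obtain ⟨c₀, hc₀k, hc₀⟩ := hC
      obtain ⟨w₀, hw₀k, hw₀⟩ := hW
      have hub := chord_bounds hn hc₀
      have hne : w₀ ≠ c₀ := by
        intro h
        rw [h] at hw₀
        rcases hw₀ with ⟨h1, h2⟩ | ⟨h1, h2⟩ <;> omega
      have hsm : ∀ j, j + 2 ≤ 5*n-10 → j ≠ c₀ → j ≠ w₀ →
          (f (j+1) = f j + 1 ∨ f j = f (j+1) + 1) := by
        intro j hj hjc hjw
        rcases step_cases hn HE j hj with h|h|h|h
        · exact h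
        · exact absurd (wrap_unique hn Hinj hj hw₀k (Or.inl h) hw₀) hjw
        · exact absurd (wrap_unique hn Hinj hj hw₀k (Or.inr h) hw₀) hjw
        · exact absurd (chord_unique hn hi1 hi2 ht HE Hinj Hs Ht hj hc₀k h hc₀) hjc
      rcases Nat.lt_trichotomy w₀ c₀ with hor | heq | hor
      · -- D1 : wrap before chord
        have hrun1 := run_of_smooth f (5*n-10) 0 w₀ Hinj (by omega) (Nat.zero_le _)
          (fun j h1 h2 => hsm j (by omega) (by omega) (by omega))
        have hrun2 := run_of_smooth f (5*n-10) (w₀+1) c₀ Hinj (by omega) (by omega)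
          (fun j h1 h2 => hsm j (by omega) (by omega) (by omega))
        have hrun3 := run_of_smooth f (5*n-10) (c₀+1) (5*n-11) Hinj (by omega) (by omega)
          (fun j h1 h2 => hsm j (by omega) (by omega) (by omega))
        rcases hw₀ with ⟨hwa, hwb⟩ | ⟨hwa, hwb⟩
        · -- D1a : wrap (1, N)
          have hApair : (∀ k, k ≤ w₀ → f k + k = 2*i-1) ∧ w₀ = 2*i-2 := by
            rcases hrun1 with h | h
            · have h1 := h w₀ (Nat.zero_le _) le_rfl
              have hw0 : w₀ = 0 ∧ i = 1 := by omega
              refine ⟨?_, by omega⟩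
              intro k hk
              have hk0 : k = 0 := by omega
              subst hk0
              omega
            · have h1 := h w₀ (Nat.zero_le _) le_rfl
              exact ⟨fun k hk => by have := h k (Nat.zero_le _) hk; omega, by omega⟩
          obtain ⟨hA, hw₀val⟩ := hApair
          have h2 : ∀ k, w₀+1 ≤ k → k ≤ c₀ → f k + k = 5*n-10 + (w₀+1) := by
            rcases hrun2 with h | h
            · by_cases hsing : w₀+1 = c₀
              · intro k hk1 hk2
                have hkc : k = c₀ := by omega
                have hfc : f c₀ = 5*n-10 := by rw [← hsing]; exact hwb
                rw [hkc]
                omega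
              · exfalso
                have e1 := h (w₀+2) (by omega) (by omega)
                have e2 := Hrange (w₀+2) (by omega)
                omega
            · intro k hk1 hk2
              have := h k hk1 hk2
              omega
          have hu := h2 c₀ (by omega) le_rfl
          rcases hrun3 with h3 | h3
          · -- run3 ascending : the canonical family-2 shape
            obtain ⟨ks, hks, hfks⟩ := Hsurj (2*i) (by omega) (by omega)
            have hv_ge : 2*i ≤ f (c₀+1) := by
              by_contra hlt
              push_neg at hlt
              have e1 := hA (2*i-1 - f (c₀+1)) (by omega)
              have heq := Hinj (2*i-1 - f (c₀+1)) (c₀+1) (by omega) (by omega) (by omega)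
              omega
            rcases Nat.lt_or_ge ks (w₀+1) with hr1 | hr1
            · exfalso
              have := hA ks (by omega)
              omega
            · rcases Nat.lt_or_ge ks (c₀+1) with hr2 | hr2
              · exfalso
                have := h2 ks hr1 (by omega)
                omega
              · have e1 := h3 ks hr2 (by omega)
                have hveq : f (c₀+1) = 2*i := by omega
                have ht3 := h3 (5*n-11) (by omega) (by omega)
                have hchord : IsChord n (f c₀) (2*i) := by rw [← hveq]; exact hc₀
                obtain ⟨huval, hbr1, hbr2, hbr3⟩ :=
                  lab_chord_up hn hi1 hi2 ht hchord (by omega)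
                intro k hk
                simp only [canon]
                rw [if_neg (by omega : ¬ i = 1), if_neg (by omega : ¬ i = 2),
                  if_neg (by omega : ¬ i ≤ 2 + (n-4)/2)]
                rcases Nat.lt_or_ge k (w₀+1) with hr | hr
                · rw [if_pos (by omega : k ≤ 2*i-2)]
                  have := hA k (by omega)
                  omega
                · rcases Nat.lt_or_ge k (c₀+1) with hr' | hr'
                  · rw [if_neg (by omega : ¬ k ≤ 2*i-2), if_pos (by omega : k ≤ 5*i-8)]
                    have := h2 k hr (by omega)
                    omega
                  · rw [if_neg (by omega : ¬ k ≤ 2*i-2), if_neg (by omega : ¬ k ≤ 5*i-8)]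
                    have := h3 k hr' (by omega)
                    omega
          · -- run3 descending : impossible (vertex u-1 uncovered)
            exfalso
            obtain ⟨k', hk', hfk'⟩ := Hsurj (f c₀ - 1) (by omega) (by omega)
            rcases Nat.lt_or_ge k' (w₀+1) with hr1 | hr1
            · have := hA k' (by omega)
              omega
            · rcases Nat.lt_or_ge k' (c₀+1) with hr2 | hr2
              · have := h2 k' hr1 (by omega)
                have heq := Hinj k' (c₀+1) (by omega) (by omega) (by omega)
                omega
              · have := h3 k' hr2 (by omega)
                omega
        · -- D1b : wrap (N, 1) : impossible
          exfalso
          rcases hrun1 with h | h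
          · have h1 := h w₀ (Nat.zero_le _) le_rfl
            rcases hrun2 with h2 | h2
            · have hu2 := h2 c₀ (by omega) le_rfl
              have hk'v := h2 (w₀ + 2*i - 1) (by omega) (by omega)
              have := Hinj (w₀ + 2*i - 1) 0 (by omega) (by omega) (by omega)
              omega
            · have := h2 c₀ (by omega) le_rfl
              omega
          · have := h w₀ (Nat.zero_le _) le_rfl
            omega
      · exact absurd heq hne
      · -- D2 : chord before wrap
        have hrun1 := run_of_smooth f (5*n-10) 0 c₀ Hinj (by omega) (Nat.zero_le _)
          (fun j h1 h2 => hsm j (by omega) (by omega) (by omega))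
        have hrun2 := run_of_smooth f (5*n-10) (c₀+1) w₀ Hinj (by omega) (by omega)
          (fun j h1 h2 => hsm j (by omega) (by omega) (by omega))
        have hrun3 := run_of_smooth f (5*n-10) (w₀+1) (5*n-11) Hinj (by omega) (by omega)
          (fun j h1 h2 => hsm j (by omega) (by omega) (by omega))
        rcases hrun1 with hA | hA
        · have hu := hA c₀ (Nat.zero_le _) le_rfl
          rcases hw₀ with ⟨hwa, hwb⟩ | ⟨hwa, hwb⟩
          · -- D2a : wrap (1, N)
            have h2 : ∀ k, c₀+1 ≤ k → k ≤ w₀ → f k + k = f (c₀+1) + (c₀+1) := by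
              rcases hrun2 with h | h
              · exfalso
                have := h w₀ (by omega) le_rfl
                omega
              · exact fun k hk1 hk2 => by have := h k hk1 hk2; omega
            have hw₀v := h2 w₀ (by omega) le_rfl
            rcases hrun3 with h3 | h3
            · -- run3 ascending : impossible
              exfalso
              by_cases hsing : w₀+1 = 5*n-11
              · have hfN : f (5*n-11) = 5*n-10 := by rw [← hsing]; exact hwb
                have hi' := lab_N hn hi1 hi2 ht (by omega)
                have := Hinj 0 w₀ (by omega) (by omega) (by omega)
                omega
              · have e1 := h3 (w₀+2) (by omega) (by omega)
                have e2 := Hrange (w₀+2) (by omega)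
                omega
            · -- run3 descending : canonical family-1 shape
              have ht3 := h3 (5*n-11) (by omega) (by omega)
              have hv_le : f (c₀+1) ≤ 2*i-2 := by
                by_contra hgt
                push_neg at hgt
                have e1 := hA (f (c₀+1) - (2*i-1)) (Nat.zero_le _) (by omega)
                have heq := Hinj (f (c₀+1) - (2*i-1)) (c₀+1) (by omega) (by omega) (by omega)
                omega
              have hk5 : ¬ (w₀ + 2 ≤ 2*i-1+c₀) := by
                intro hle
                have e1 := h3 (5*n-10 + (w₀+1) - (2*i-1+c₀)) (by omega) (by omega)
                have heq := Hinj (5*n-10 + (w₀+1) - (2*i-1+c₀)) c₀ (by omega) (by omega)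
                  (by omega)
                omega
              have hveq : f (c₀+1) = 2*i-2 := by omega
              have hchord : IsChord n (f c₀) (2*i-2) := by rw [← hveq]; exact hc₀
              have hrt := Hrange (5*n-11) (by omega)
              obtain ⟨huval, hbr1, hbr2⟩ :=
                lab_chord_down hn hi1 hi2 ht hchord (by omega) (by omega)
              intro k hk
              simp only [canon]
              rw [if_neg (by omega : ¬ i = 1), if_neg (by omega : ¬ i = 2),
                if_pos (by omega : i ≤ 2 + (n-4)/2)]
              rcases Nat.lt_or_ge k (c₀+1) with hr | hr
              · rw [if_pos (by omega : k ≤ 5*n-3-5*i)]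
                have := hA k (Nat.zero_le _) (by omega)
                omega
              · rcases Nat.lt_or_ge k (w₀+1) with hr' | hr'
                · rw [if_neg (by omega : ¬ k ≤ 5*n-3-5*i), if_pos (by omega : k ≤ 5*n-5-3*i)]
                  have := h2 k hr (by omega)
                  omega
                · rw [if_neg (by omega : ¬ k ≤ 5*n-3-5*i), if_neg (by omega : ¬ k ≤ 5*n-5-3*i)]
                  have := h3 k hr' (by omega)
                  omega
          · -- D2b : wrap (N, 1) : impossible
            exfalso
            rcases hrun2 with h2 | h2
            · have hNw := h2 w₀ (by omega) le_rfl
              have e1 := h2 (c₀+1 + (2*i-1+c₀ - f (c₀+1))) (by omega) (by omega)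
              have heq := Hinj (c₀+1 + (2*i-1+c₀ - f (c₀+1))) c₀ (by omega) (by omega)
                (by omega)
              omega
            · have := h2 w₀ (by omega) le_rfl
              omega
        · exfalso
          have := hA c₀ (Nat.zero_le _) le_rfl
          omega
    · -- Case C : one chord, no wrap
      obtain ⟨c₀, hc₀k, hc₀⟩ := hC
      have hub := chord_bounds hn hc₀
      have hsm : ∀ j, j + 2 ≤ 5*n-10 → j ≠ c₀ →
          (f (j+1) = f j + 1 ∨ f j = f (j+1) + 1) := by
        intro j hj hjc
        rcases step_cases hn HE j hj with h|h|h|h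
        · exact h
        · exact absurd ⟨j, hj, Or.inl h⟩ hW
        · exact absurd ⟨j, hj, Or.inr h⟩ hW
        · exact absurd (chord_unique hn hi1 hi2 ht HE Hinj Hs Ht hj hc₀k h hc₀) hjc
      have hrun1 := run_of_smooth f (5*n-10) 0 c₀ Hinj (by omega) (Nat.zero_le _)
        (fun j h1 h2 => hsm j (by omega) (by omega))
      have hrun2 := run_of_smooth f (5*n-10) (c₀+1) (5*n-11) Hinj (by omega) (by omega)
        (fun j h1 h2 => hsm j (by omega) (by omega))
      rcases hrun1 with hA | hA
      · have hu := hA c₀ (Nat.zero_le _) le_rfl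
        obtain ⟨kN, hkN, hfkN⟩ := Hsurj (5*n-10) (by omega) le_rfl
        rcases Nat.lt_or_ge kN (c₀+1) with hkNlt | hkNge
        · -- N in run1 : chord from the top, label 2
          have e0 := hA kN (Nat.zero_le _) (by omega)
          have hcr := Hrange c₀ (by omega)
          have huN : f c₀ = 5*n-10 := by omega
          rw [huN] at hc₀
          have hv2 : f (c₀+1) = 2 := chord_src_top hn hc₀
          rcases hrun2 with hB | hB
          · exfalso
            obtain ⟨k1, hk1, hfk1⟩ := Hsurj 1 le_rfl (by omega)
            rcases Nat.lt_or_ge k1 (c₀+1) with hl | hl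
            · have := hA k1 (Nat.zero_le _) (by omega)
              omega
            · have := hB k1 hl (by omega)
              omega
          · have hrt := Hrange (5*n-11) (by omega)
            have ht2 := hB (5*n-11) (by omega) (by omega)
            have hc0val : c₀ = 5*n-13 ∧ i = 2 := by omega
            intro k hk
            simp only [canon]
            rw [if_neg (by omega : ¬ i = 1), if_pos (by omega : i = 2)]
            rcases Nat.lt_or_ge k (c₀+1) with hr | hr
            · rw [if_pos (by omega : k ≤ 5*n-13)]
              have := hA k (Nat.zero_le _) (by omega)
              omega
            · rw [if_neg (by omega : ¬ k ≤ 5*n-13)]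
              have := hB k hr (by omega)
              omega
        · -- N in run2
          rcases hrun2 with hB | hB
          · exfalso
            have hN := hB kN (by omega) (by omega)
            have hrt := Hrange (5*n-11) (by omega)
            have ht2 := hB (5*n-11) (by omega) (by omega)
            have htN : t = 5*n-10 := by omega
            have hi' := lab_N hn hi1 hi2 ht htN
            have hne := chord_ne_succ hn hc₀
            omega
          · exfalso
            have := hB kN (by omega) (by omega)
            omega
      · exfalso
        have := hA c₀ (Nat.zero_le _) le_rfl
        omega
  · by_cases hW : ∃ k, k + 2 ≤ 5*n-10 ∧
        (f k = 1 ∧ f (k+1) = 5*n-10 ∨ f k = 5*n-10 ∧ f (k+1) = 1)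
    · -- Case B : no chord, one wrap
      obtain ⟨w₀, hw₀k, hw₀⟩ := hW
      push_neg at hC
      have hsm : ∀ j, j + 2 ≤ 5*n-10 → j ≠ w₀ →
          (f (j+1) = f j + 1 ∨ f j = f (j+1) + 1) := by
        intro j hj hjw
        rcases step_cases hn HE j hj with h|h|h|h
        · exact h
        · exact absurd (wrap_unique hn Hinj hj hw₀k (Or.inl h) hw₀) hjw
        · exact absurd (wrap_unique hn Hinj hj hw₀k (Or.inr h) hw₀) hjw
        · exact absurd h (hC j hj)
      have hrun1 := run_of_smooth f (5*n-10) 0 w₀ Hinj (by omega) (Nat.zero_le _)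
        (fun j h1 h2 => hsm j (by omega) (by omega))
      have hrun2 := run_of_smooth f (5*n-10) (w₀+1) (5*n-11) Hinj (by omega) (by omega)
        (fun j h1 h2 => hsm j (by omega) (by omega))
      rcases hw₀ with ⟨hwa, hwb⟩ | ⟨hwa, hwb⟩
      · -- B1 : wrap (1, N)
        have hApair : (∀ k, k ≤ w₀ → f k + k = 2*i-1) ∧ w₀ = 2*i-2 := by
          rcases hrun1 with h | h
          · have h1 := h w₀ (Nat.zero_le _) le_rfl
            have hw0 : w₀ = 0 ∧ i = 1 := by omega
            refine ⟨?_, by omega⟩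
            intro k hk
            have hk0 : k = 0 := by omega
            subst hk0
            omega
          · have h1 := h w₀ (Nat.zero_le _) le_rfl
            exact ⟨fun k hk => by have := h k (Nat.zero_le _) hk; omega, by omega⟩
        obtain ⟨hA, hw₀val⟩ := hApair
        rcases hrun2 with hB | hB
        · exfalso
          by_cases hsing : w₀ + 1 = 5*n-11
          · rw [hsing] at hwb
            have hi' := lab_N hn hi1 hi2 ht (by omega)
            omega
          · have e1 := hB (w₀+2) (by omega) (by omega)
            have e2 := Hrange (w₀+2) (by omega)
            omega
        · have ht2 := hB (5*n-11) (by omega) (by omega)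
          have hteq : t = 2*i := by omega
          have hin : i = n := lab_2i hn hi1 hi2 ht hteq
          intro k hk
          simp only [canon]
          rw [if_neg (by omega : ¬ i = 1), if_neg (by omega : ¬ i = 2),
            if_neg (by omega : ¬ i ≤ 2 + (n-4)/2)]
          rcases Nat.lt_or_ge k (w₀+1) with hr | hr
          · rw [if_pos (by omega : k ≤ 2*i-2)]
            have := hA k (by omega)
            omega
          · rw [if_neg (by omega : ¬ k ≤ 2*i-2), if_pos (by omega : k ≤ 5*i-8)]
            have := hB k hr (by omega)
            omega
      · -- B2 : wrap (N, 1) : impossible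
        exfalso
        have hAw : f w₀ + 0 = f 0 + w₀ := by
          rcases hrun1 with h | h
          · exact h w₀ (Nat.zero_le _) le_rfl
          · have := h w₀ (Nat.zero_le _) le_rfl
            omega
        rcases hrun2 with hB | hB
        · have ht2 := hB (5*n-11) (by omega) (by omega)
          exact lab_2i2 hn hi1 hi2 ht (by omega)
        · have ht2 := hB (5*n-11) (by omega) (by omega)
          have hrt := Hrange (5*n-11) (by omega)
          omega
    · -- Case A : no chord, no wrap
      push_neg at hC
      have hsm : ∀ j, 0 ≤ j → j < 5*n-11 → (f (j+1) = f j + 1 ∨ f j = f (j+1) + 1) := by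
        intro j _ hj
        rcases step_cases hn HE j (by omega) with h|h|h|h
        · exact h
        · exact absurd ⟨j, by omega, Or.inl h⟩ hW
        · exact absurd ⟨j, by omega, Or.inr h⟩ hW
        · exact absurd h (hC j (by omega))
      rcases run_of_smooth f (5*n-10) 0 (5*n-11) Hinj (by omega) (by omega) hsm with hA | hA
      · have h1 := hA (5*n-11) (Nat.zero_le _) le_rfl
        have h2 := Hrange (5*n-11) (by omega)
        have hieq : i = 1 := by omega
        intro k hk
        simp only [canon]
        rw [if_pos hieq]
        have h3 := hA k (Nat.zero_le _) (by omega)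
        omega
      · exfalso
        have h1 := hA (5*n-11) (Nat.zero_le _) le_rfl
        have h2 := Hrange (5*n-11) (by omega)
        omega

lemma list_to_fn {n i t : ℕ} {l : List ℕ}
    (hn : 4 ≤ n) (hi1 : 1 ≤ i) (hi2 : i ≤ n) (ht : outLabelRel n t i)
    (h : IsCrownHamPath n (2*i-1) t l) :
    l.length = 5*n-10 ∧ ∀ k, ∀ hk : k < l.length, l[k] = canon n i k := by
  obtain ⟨hchain, hhead, hlast, hnodup, hmem⟩ := h
  have hfin : l.toFinset = Finset.Icc 1 (5*n-10) :=
    Finset.ext fun x => by rw [List.mem_toFinset]; exact hmem x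
  have hlen : l.length = 5*n-10 := by
    have hc := List.toFinset_card_of_nodup hnodup
    rw [hfin, Nat.card_Icc] at hc
    omega
  refine ⟨hlen, ?_⟩
  set f : ℕ → ℕ := fun k => l.getD k 0 with hf
  have hfd : ∀ k, ∀ hk : k < l.length, f k = l[k] :=
    fun k hk => l.getD_eq_getElem 0 hk
  have HE : ∀ k, k + 2 ≤ 5*n-10 → (f k, f (k+1)) ∈ crownEdges n := by
    intro k hk
    rw [hfd k (by omega), hfd (k+1) (by omega)]
    exact List.isChain_iff_getElem.1 hchain k (by omega)
  have Hinj : ∀ k j, k < 5*n-10 → j < 5*n-10 → f k = f j → k = j := by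
    intro k j hk hj he
    rw [hfd k (by omega), hfd j (by omega)] at he
    have := List.Nodup.get_inj_iff hnodup (i := ⟨k, by omega⟩) (j := ⟨j, by omega⟩)
    simp only [List.get_eq_getElem] at this
    have := this.1 he
    exact congrArg Fin.val this
  have Hsurj : ∀ v, 1 ≤ v → v ≤ 5*n-10 → ∃ k, k < 5*n-10 ∧ f k = v := by
    intro v hv1 hv2
    have hvl : v ∈ l := (hmem v).2 (Finset.mem_Icc.2 ⟨hv1, hv2⟩)
    obtain ⟨k, hk, he⟩ := List.mem_iff_getElem.1 hvl
    exact ⟨k, by omega, by rw [hfd k (by omega)]; exact he⟩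
  have Hrange : ∀ k, k < 5*n-10 → 1 ≤ f k ∧ f k ≤ 5*n-10 := by
    intro k hk
    rw [hfd k (by omega)]
    have : l[k]'(by omega) ∈ l := List.getElem_mem (by omega)
    have := (hmem _).1 this
    rw [Finset.mem_Icc] at this
    exact this
  have hnil : 0 < l.length := by omega
  have Hs : f 0 = 2*i-1 := by
    rw [hfd 0 (by omega)]
    rw [List.head?_eq_getElem?, List.getElem?_eq_getElem hnil] at hhead
    exact Option.some.inj hhead
  have Ht : f (5*n-11) = t := by
    rw [hfd (5*n-11) (by omega)]
    rw [List.getLast?_eq_getElem?, List.getElem?_eq_getElem (by omega : l.length - 1 < l.length)] at hlast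
    have := Option.some.inj hlast
    rw [← this]
    congr 1
    omega
  have main := path_canon n i t f hn hi1 hi2 ht HE Hinj Hsurj Hrange Hs Ht
  intro k hk
  rw [← hfd k (by omega)]
  exact main k (by omega)

end CrownUnique

/-- For each label `i`, there is at most one directed Hamiltonian path through the
crown subgraph `C_n` from the entry vertex `2i-1` of the incoming edge labelled `i` to
the exit vertex of the outgoing edge labelled `i`. -/
theorem crown_ham_path_unique (n : ℕ) (hn : 4 ≤ n) (i : ℕ) (hi1 : 1 ≤ i) (hi2 : i ≤ n)
    (t : ℕ) (ht : outLabelRel n t i) (l₁ l₂ : List ℕ)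
    (h₁ : IsCrownHamPath n (2*i-1) t l₁) (h₂ : IsCrownHamPath n (2*i-1) t l₂) :
    l₁ = l₂ := by
  obtain ⟨hl1, he1⟩ := CrownUnique.list_to_fn hn hi1 hi2 ht h₁
  obtain ⟨hl2, he2⟩ := CrownUnique.list_to_fn hn hi1 hi2 ht h₂
  apply List.ext_getElem (by omega)
  intro k hk1 hk2
  rw [he1 k hk1, he2 k hk2]
end

section
/- For every k ≥ 4 and every N, there exists a directed graph with more than N vertices containing exactly k directed Hamiltonian cycles. -/
/-!
Removing the vertex `h` from the rotation of `Fin m` leaves a cycle `c` through the other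
vertices. In the digraph made of the arcs `v → c v` and, for the `k` vertices `j` of a set `J`,
the spokes `j → h → c j`, a Hamiltonian cycle has to enter `h` from some `j ∈ J`, and then the
arcs `v → c v` are the only ones left for every `v ∉ {h, j}`. So the Hamiltonian cycles are
exactly the `k` cycles obtained by inserting `h` into `c` right after some `j ∈ J`.
-/

/-- A directed Hamiltonian cycle in the digraph with arc relation `R`, encoded (up to
cyclic rotation) by its successor permutation: a cyclic permutation of all the vertices
each of whose steps is an arc of the digraph. -/
def IsHamCycle {V : Type*} [Fintype V] [DecidableEq V] (R : V → V → Prop)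
    (σ : Equiv.Perm V) : Prop :=
  σ.IsCycle ∧ σ.support = Finset.univ ∧ ∀ v, R v (σ v)

open Equiv Equiv.Perm Finset

variable {α : Type*} [DecidableEq α]

theorem Equiv.Perm.ext_of_forall_ne {σ τ : Perm α} (a : α) (h : ∀ v, v ≠ a → σ v = τ v) :
    σ = τ := by
  ext v
  by_cases hv : v = a
  · subst hv
    obtain ⟨w, hw⟩ := σ.surjective (τ v)
    by_cases hwv : w = v
    · rwa [hwv] at hw
    · exact absurd (τ.injective ((h w hwv).symm.trans hw)) hwv
  · exact h v hv

theorem Equiv.Perm.IsCycle.swap_mul_of_notMem_support [Fintype α] {c : Perm α}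
    (hc : c.IsCycle) {x y : α} (hx : x ∉ c.support) (hy : y ∈ c.support) :
    (swap x y * c).IsCycle ∧ (swap x y * c).support = insert x c.support := by
  have hmem : ∀ z, z ∈ c.toList y ↔ z ∈ c.support := fun z => by
    rw [mem_toList_iff]
    exact ⟨fun hz => hz.1.mem_support_iff.mp hy,
      fun hz => ⟨hc.sameCycle (mem_support.mp hy) (mem_support.mp hz), hy⟩⟩
  obtain ⟨z, l, hl⟩ := List.exists_cons_of_ne_nil (toList_eq_nil_iff.not.mpr (not_not.mpr hy))
  obtain rfl : y = z := by simpa [hl] using (toList_getElem_zero c y hy).symm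
  have hformPerm : swap x y * c = (x :: c.toList y).formPerm := by
    rw [hl, List.formPerm_cons_cons, ← hl, formPerm_toList, hc.cycleOf_eq (mem_support.mp hy)]
  have hnodup : (x :: c.toList y).Nodup :=
    List.nodup_cons.mpr ⟨mt (hmem x).mp hx, nodup_toList c y⟩
  rw [hformPerm]
  refine ⟨List.isCycle_formPerm hnodup (by simp [hl]), ?_⟩
  rw [List.support_formPerm_of_nodup _ hnodup (by simp [hl])]
  ext z
  simp [hmem]

def insertAfter (c : Perm α) (h j : α) : Perm α :=
  swap h (c j) * c

theorem insertAfter_apply_self (c : Perm α) (h j : α) : insertAfter c h j j = h := by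
  simp [insertAfter]

def wheelRel (c : Perm α) (h : α) (J : Finset α) (u v : α) : Prop :=
  (u ≠ h ∧ v = c u) ∨ (u ∈ J ∧ v = h) ∨ (u = h ∧ ∃ j ∈ J, v = c j)

section Wheel

variable {c : Perm α} {h : α} {J : Finset α}

theorem eq_insertAfter_of_forall_wheelRel (hh : c h = h) (hJ : h ∉ J) {σ : Perm α}
    (hσ : ∀ v, wheelRel c h J v (σ v)) : σ⁻¹ h ∈ J ∧ σ = insertAfter c h (σ⁻¹ h) := by
  set j := σ⁻¹ h
  have hσj : σ j = h := σ.apply_symm_apply h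
  have hj : j ∈ J := by
    rcases hσ j with ⟨hjh, hcj⟩ | ⟨hj, -⟩ | ⟨-, j', hj', hcj'⟩
    · rw [hσj, ← hh] at hcj
      exact absurd (c.injective hcj).symm hjh
    · exact hj
    · rw [hσj, ← hh] at hcj'
      exact absurd ((c.injective hcj') ▸ hj') hJ
  refine ⟨hj, ext_of_forall_ne h fun v hvh => ?_⟩
  by_cases hvj : v = j
  · rw [hvj, hσj, insertAfter_apply_self]
  have hσv : σ v ≠ h := fun hv => hvj (σ.injective (hv.trans hσj.symm))
  rcases hσ v with ⟨-, hcv⟩ | ⟨-, hv⟩ | ⟨hv, -⟩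
  · rw [hcv, insertAfter, mul_apply, swap_apply_of_ne_of_ne (hcv ▸ hσv) (c.injective.ne hvj)]
  · exact absurd hv hσv
  · exact absurd hv hvh

variable [Fintype α]

theorem isHamCycle_insertAfter (hc : c.IsCycle) (hsupp : c.support = univ.erase h)
    (hJ : h ∉ J) {j : α} (hj : j ∈ J) : IsHamCycle (wheelRel c h J) (insertAfter c h j) := by
  have hh : c h = h := notMem_support.mp (by simp [hsupp])
  have hjh : j ≠ h := ne_of_mem_of_not_mem hj hJ
  obtain ⟨hcycle, hsupport⟩ := hc.swap_mul_of_notMem_support (x := h) (y := c j)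
    (by simp [hsupp]) (apply_mem_support.mpr (by simp [hsupp, hjh]))
  refine ⟨hcycle, by simp [insertAfter, hsupport, hsupp], fun v => ?_⟩
  by_cases hvh : v = h
  · subst hvh
    exact Or.inr (Or.inr ⟨rfl, j, hj, by simp [insertAfter, hh]⟩)
  by_cases hvj : v = j
  · subst hvj
    exact Or.inr (Or.inl ⟨hj, insertAfter_apply_self c h v⟩)
  refine Or.inl ⟨hvh, swap_apply_of_ne_of_ne ?_ (c.injective.ne hvj)⟩
  rw [← hh]
  exact c.injective.ne hvh

theorem card_isHamCycle_wheelRel (hc : c.IsCycle) (hsupp : c.support = univ.erase h)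
    (hJ : h ∉ J) : Nat.card {σ : Perm α // IsHamCycle (wheelRel c h J) σ} = #J := by
  have hh : c h = h := notMem_support.mp (by simp [hsupp])
  let e : {σ : Perm α // IsHamCycle (wheelRel c h J) σ} ≃ J :=
    { toFun := fun σ => ⟨σ.1⁻¹ h, (eq_insertAfter_of_forall_wheelRel hh hJ σ.2.2.2).1⟩
      invFun := fun j => ⟨insertAfter c h j, isHamCycle_insertAfter hc hsupp hJ j.2⟩
      left_inv := fun σ => Subtype.ext (eq_insertAfter_of_forall_wheelRel hh hJ σ.2.2.2).2.symm
      right_inv := fun j =>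
        Subtype.ext (inv_eq_iff_eq.mpr (insertAfter_apply_self c h j).symm) }
  rw [Nat.card_congr e, Nat.card_eq_fintype_card, Fintype.card_coe]

end Wheel

theorem exists_rel_card_isHamCycle_eq (n k : ℕ) (hk : k ≤ n + 2) :
    ∃ R : Fin (n + 3) → Fin (n + 3) → Prop,
      Nat.card {σ : Perm (Fin (n + 3)) // IsHamCycle R σ} = k := by
  set f := finRotate (n + 3)
  set x := Fin.last (n + 2)
  have hfx : f x ≠ x := by simp [f, x]
  have hffx : f (f x) ≠ x := by simp [f, x, Fin.ext_iff]
  have hc : (swap x (f x) * f).IsCycle :=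
    (isCycle_finRotate_of_le (by omega)).swap_mul hfx hffx
  have hsupp : (swap x (f x) * f).support = univ.erase x := by
    rw [support_swap_mul_eq _ _ hffx, support_finRotate_of_le (by omega), sdiff_singleton_eq_erase]
  have hJ : x ∉ Iio (⟨k, by omega⟩ : Fin (n + 3)) := by
    simp [x, Fin.le_last]
  exact ⟨wheelRel _ x _, (card_isHamCycle_wheelRel hc hsupp hJ).trans (Fin.card_Iio _)⟩

theorem exists_large_digraph_with_k_ham_cycles_general (k N : ℕ) :
    ∃ m : ℕ, N < m ∧ ∃ R : Fin m → Fin m → Prop,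
      Nat.card {σ : Equiv.Perm (Fin m) // IsHamCycle R σ} = k :=
  ⟨N + k + 3, by omega, exists_rel_card_isHamCycle_eq (N + k) k (by omega)⟩

/-- For every `k ≥ 4` and every `N`, there is a directed graph with more than `N`
vertices containing exactly `k` directed Hamiltonian cycles (counted up to rotation). -/
theorem exists_large_digraph_with_k_ham_cycles (k N : ℕ) (hk : 4 ≤ k) :
    ∃ m : ℕ, N < m ∧ ∃ R : Fin m → Fin m → Prop,
      Nat.card {σ : Equiv.Perm (Fin m) // IsHamCycle R σ} = k :=
  exists_large_digraph_with_k_ham_cycles_general k N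
end

section
/- For any integers n ≥ k ≥ 4, there exists a simple undirected graph on 15n - 27 vertices containing exactly k Hamiltonian cycles. -/
/-- The set of Hamiltonian cycles of a graph, regarded as edge sets. -/
def hamCycleSets {V : Type*} [DecidableEq V] (G : SimpleGraph V) : Set (Set (Sym2 V)) :=
  {s | ∃ (u : V) (w : G.Walk u u), w.IsHamiltonianCycle ∧ s = {e | e ∈ w.edges}}

/-!
Take the cone over the cycle `C_N`, `N = 15n - 28`, whose apex is joined to an arc of `k + 1`
consecutive vertices. Every vertex of a Hamiltonian cycle has exactly two neighbours on it, and
every vertex of `C_N` has exactly two neighbours besides the apex. So if the cycle leaves the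
apex towards `a` and `b`, it contains both edges of `C_N` at every other vertex; this forces `ab`
to be an edge of `C_N` and the cycle to be `C_N` with `ab` replaced by the detour through the
apex. The Hamiltonian cycles thus correspond to the `k` edges of `C_N` inside the arc.
-/

theorem Set.eq_pair_of_ncard_eq_two {α : Type*} {s : Set α} {x y : α} (hs : s.ncard = 2)
    (hx : x ∈ s) (hy : y ∈ s) (hxy : x ≠ y) : s = {x, y} :=
  (eq_of_subset_of_ncard_le (pair_subset hx hy) (by rw [hs, ncard_pair hxy])
    (finite_of_ncard_pos (by omega))).symm

namespace SimpleGraph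

variable {V : Type*} {G : SimpleGraph V} {u v a b : V}

namespace Walk

variable [DecidableEq V]

theorem isHamiltonian_copy {u' v' : V} {p : G.Walk u v} (hu : u = u') (hv : v = v') :
    (p.copy hu hv).IsHamiltonian ↔ p.IsHamiltonian := by
  subst hu hv
  rfl

theorem IsHamiltonian.reverse {p : G.Walk u v} (hp : p.IsHamiltonian) : p.reverse.IsHamiltonian :=
  fun x => by simpa using hp x

theorem IsHamiltonianCycle.ncard_neighborSet_toSubgraph_eq_two {p : G.Walk u u}
    (hp : p.IsHamiltonianCycle) (x : V) : (p.toSubgraph.neighborSet x).ncard = 2 :=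
  hp.isCycle.ncard_neighborSet_toSubgraph_eq_two (hp.mem_support x)

end Walk

theorem Iso.ncard_hamCycleSets_eq [DecidableEq V] {W : Type*} [DecidableEq W]
    {H : SimpleGraph W} (f : G ≃g H) : (hamCycleSets G).ncard = (hamCycleSets H).ncard := by
  have himage : hamCycleSets H = Set.image (Sym2.map f) '' hamCycleSets G := by
    ext s
    constructor
    · rintro ⟨u, w, hw, rfl⟩
      refine ⟨_, ⟨f.symm u, w.map f.symm.toHom, hw.map f.symm.bijective, rfl⟩, ?_⟩
      ext e
      simp [Walk.edges_map, Sym2.map_map]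
    · rintro ⟨s, ⟨u, w, hw, rfl⟩, rfl⟩
      exact ⟨f u, w.map f.toHom, hw.map f.bijective, by ext; simp [Walk.edges_map]⟩
  rw [himage,
    Set.ncard_image_of_injective _ (Set.image_injective.2 (Sym2.map.injective f.injective))]

/-- The cone over `G` with apex `none` joined to the vertices in `S`. -/
def cone (G : SimpleGraph V) (S : Set V) : SimpleGraph (Option V) where
  Adj
    | some u, some v => G.Adj u v
    | none, some v => v ∈ S
    | some u, none => u ∈ S
    | none, none => False
  symm.symm := by rintro (_ | u) (_ | v) h <;> simp_all [G.adj_comm]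
  loopless.irrefl := by rintro (_ | u) h; exacts [h, G.loopless.irrefl u h]

variable {S : Set V}

@[simp] theorem cone_adj_some_some : (G.cone S).Adj (some u) (some v) ↔ G.Adj u v := Iff.rfl
@[simp] theorem cone_adj_none_some : (G.cone S).Adj none (some v) ↔ v ∈ S := Iff.rfl
@[simp] theorem cone_adj_some_none : (G.cone S).Adj (some u) none ↔ u ∈ S := Iff.rfl
@[simp] theorem not_cone_adj_none_none : ¬(G.cone S).Adj none none := id

def coneBase (G : SimpleGraph V) (S : Set V) : G →g G.cone S := ⟨some, id⟩

theorem coe_coneBase : ⇑(G.coneBase S) = some := rfl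

/-- The edge set of the Hamiltonian cycle of a cone over a cycle `G` that replaces the edge `ab`
of `G` by the detour through the apex. -/
def apexDetour (G : SimpleGraph V) (a b : V) : Set (Sym2 (Option V)) :=
  Sym2.map some '' (G.edgeSet \ {s(a, b)}) ∪ {s(none, some a), s(none, some b)}

theorem mk_some_some_mem_apexDetour :
    s(some u, some v) ∈ G.apexDetour a b ↔ G.Adj u v ∧ s(u, v) ≠ s(a, b) := by
  rw [apexDetour, ← Sym2.map_mk, Set.mem_union,
    (Sym2.map.injective (Option.some_injective V)).mem_set_image]
  simp

theorem mk_none_some_mem_apexDetour : s(none, some v) ∈ G.apexDetour a b ↔ v = a ∨ v = b := by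
  simp [apexDetour, Sym2.exists]

theorem mk_none_none_notMem_apexDetour : s(none, none) ∉ G.apexDetour a b := by
  simp [apexDetour, Sym2.exists]

theorem apexDetour_comm : G.apexDetour a b = G.apexDetour b a := by
  rw [apexDetour, apexDetour, Sym2.eq_swap, Set.pair_comm]

namespace Subgraph

variable {T : (G.cone S).Subgraph} {x y : V}

theorem adj_some_some_iff_of_not_apex_adj (hG : (G.neighborSet x).ncard = 2)
    (hT : (T.neighborSet (some x)).ncard = 2) (hx : ¬T.Adj none (some x)) :
    T.Adj (some x) (some y) ↔ G.Adj x y := by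
  have hsub : T.neighborSet (some x) ⊆ some '' G.neighborSet x := by
    rintro (_ | z) h
    · exact absurd h.symm hx
    · exact ⟨z, T.adj_sub h, rfl⟩
  have heq : T.neighborSet (some x) = some '' G.neighborSet x :=
    Set.eq_of_subset_of_ncard_le hsub
      (by rw [Set.ncard_image_of_injective _ (Option.some_injective V), hG, hT])
      ((Set.finite_of_ncard_pos (by omega)).image _)
  rw [← mem_neighborSet, heq, (Option.some_injective V).mem_set_image,
    SimpleGraph.mem_neighborSet]

theorem apex_adj_iff_of_ncard_eq_two (hT : (T.neighborSet none).ncard = 2)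
    (ha : T.Adj none (some a)) (hb : T.Adj none (some b)) (hab : a ≠ b) :
    T.Adj none (some x) ↔ x = a ∨ x = b := by
  rw [← mem_neighborSet, Set.eq_pair_of_ncard_eq_two hT ha hb (by simpa)]
  simp

theorem neighborSet_some_eq_of_apex_adj_iff (hG : ∀ v, (G.neighborSet v).ncard = 2)
    (hT : ∀ x, (T.neighborSet x).ncard = 2) (hapex : ∀ x, T.Adj none (some x) ↔ x = a ∨ x = b)
    {c : V} (hc : G.Adj a c) (hcb : c ≠ b) :
    T.neighborSet (some a) = {none, some c} := by
  refine Set.eq_pair_of_ncard_eq_two (hT _) ((hapex a).2 (.inl rfl)).symm ?_ (by simp)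
  refine ((adj_some_some_iff_of_not_apex_adj (hG c) (hT _) ?_).2 hc.symm).symm
  rw [hapex]
  rintro (rfl | rfl)
  exacts [hc.ne rfl, hcb rfl]

/-- Otherwise both `G`-neighbours of `a` would be `T`-neighbours of `a`, besides the apex. -/
theorem adj_of_apex_adj_iff (hG : ∀ v, (G.neighborSet v).ncard = 2)
    (hT : ∀ x, (T.neighborSet x).ncard = 2) (hapex : ∀ x, T.Adj none (some x) ↔ x = a ∨ x = b) :
    G.Adj a b := by
  obtain ⟨c, hc, hcb⟩ := Set.exists_ne_of_one_lt_ncard (by rw [hG a]; omega) b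
  obtain ⟨d, hd, hdc⟩ := Set.exists_ne_of_one_lt_ncard (by rw [hG a]; omega) c
  by_contra hab
  have hdb : d ≠ b := by rintro rfl; exact hab hd
  have := (neighborSet_some_eq_of_apex_adj_iff hG hT hapex hc hcb).symm.trans
    (neighborSet_some_eq_of_apex_adj_iff hG hT hapex hd hdb)
  simp [Set.pair_eq_pair_iff, hdc.symm] at this

theorem not_adj_of_apex_adj_iff (hG : ∀ v, (G.neighborSet v).ncard = 2)
    (hT : ∀ x, (T.neighborSet x).ncard = 2) (hapex : ∀ x, T.Adj none (some x) ↔ x = a ∨ x = b) :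
    ¬T.Adj (some a) (some b) := by
  obtain ⟨c, hc, hcb⟩ := Set.exists_ne_of_one_lt_ncard (by rw [hG a]; omega) b
  intro h
  have : some b ∈ T.neighborSet (some a) := h
  simp [neighborSet_some_eq_of_apex_adj_iff hG hT hapex hc hcb, hcb.symm] at this

theorem adj_some_some_iff_of_apex_adj_iff (hG : ∀ v, (G.neighborSet v).ncard = 2)
    (hT : ∀ x, (T.neighborSet x).ncard = 2) (hapex : ∀ x, T.Adj none (some x) ↔ x = a ∨ x = b) :
    T.Adj (some x) (some y) ↔ G.Adj x y ∧ s(x, y) ≠ s(a, b) := by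
  have away : ∀ x y, x ≠ a → x ≠ b →
      (T.Adj (some x) (some y) ↔ G.Adj x y ∧ s(x, y) ≠ s(a, b)) := fun x y hxa hxb => by
    rw [adj_some_some_iff_of_not_apex_adj (hG x) (hT _) (by rw [hapex]; tauto), iff_self_and]
    rintro - h
    rcases Sym2.mem_iff.1 (h ▸ Sym2.mem_mk_left x y) with rfl | rfl <;> contradiction
  by_cases hx : x ≠ a ∧ x ≠ b
  · exact away x y hx.1 hx.2
  by_cases hy : y ≠ a ∧ y ≠ b
  · rw [T.adj_comm, G.adj_comm, Sym2.eq_swap]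
    exact away y x hy.1 hy.2
  have hab := not_adj_of_apex_adj_iff hG hT hapex
  have loop : ∀ z, ¬T.Adj (some z) (some z) := fun z h => (T.adj_sub h).ne rfl
  obtain rfl | rfl : x = a ∨ x = b := by tauto
  · obtain rfl | rfl : y = x ∨ y = b := by tauto
    · exact iff_of_false (loop y) fun h => h.1.ne rfl
    · exact iff_of_false hab fun h => h.2 rfl
  · obtain rfl | rfl : y = a ∨ y = x := by tauto
    · exact iff_of_false (fun h => hab h.symm) fun h => h.2 Sym2.eq_swap
    · exact iff_of_false (loop y) fun h => h.1.ne rfl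

theorem edgeSet_eq_apexDetour (hG : ∀ v, (G.neighborSet v).ncard = 2)
    (hT : ∀ x, (T.neighborSet x).ncard = 2) (hapex : ∀ x, T.Adj none (some x) ↔ x = a ∨ x = b) :
    T.edgeSet = G.apexDetour a b := by
  ext e
  induction e using Sym2.ind with | h x y => ?_
  rw [Subgraph.mem_edgeSet]
  rcases x with _ | x <;> rcases y with _ | y
  · exact iff_of_false (fun h => not_cone_adj_none_none (T.adj_sub h))
      mk_none_none_notMem_apexDetour
  · rw [hapex, mk_none_some_mem_apexDetour]
  · rw [T.adj_comm, hapex, Sym2.eq_swap, mk_none_some_mem_apexDetour]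
  · rw [adj_some_some_iff_of_apex_adj_iff hG hT hapex, mk_some_some_mem_apexDetour]

end Subgraph

theorem Walk.IsHamiltonian.exists_isHamiltonianCycle_cone [DecidableEq V] {p : G.Walk u v}
    (hp : p.IsHamiltonian) (huv : u ≠ v) (hu : u ∈ S) (hv : v ∈ S) :
    ∃ w : (G.cone S).Walk none none, w.IsHamiltonianCycle ∧
      w.toSubgraph.Adj none (some u) ∧ w.toSubgraph.Adj none (some v) := by
  have hv' : (G.cone S).Adj (G.coneBase S v) none := cone_adj_some_none.2 hv
  have hu' : (G.cone S).Adj none (G.coneBase S u) := cone_adj_none_some.2 hu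
  let q := (p.map (G.coneBase S)).concat hv'
  have hsupp : q.support = p.support.map some ++ [none] := by
    rw [Walk.support_concat, Walk.support_map]; rfl
  have hedges : q.edges = p.edges.map (Sym2.map some) ++ [s(some v, none)] := by
    rw [Walk.edges_concat, Walk.edges_map, List.concat_eq_append]; rfl
  have hq : q.IsPath := Walk.IsPath.mk' <| by
    rw [hsupp, List.nodup_append]
    simp [hp.isPath.support_nodup.map (Option.some_injective V)]
  have hfirst : s(none, some u) ∉ q.edges := by
    rw [hedges]
    simp only [List.mem_append, List.mem_map, List.mem_singleton, Sym2.eq_swap (a := some v)]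
    rintro (⟨e, -, he⟩ | h)
    · have : none ∈ Sym2.map some e := he ▸ Sym2.mem_mk_left _ _
      simp [Sym2.mem_map] at this
    · exact huv (Option.some_injective V (Sym2.congr_right.1 h))
  have hqH : q.IsHamiltonian := hq.isHamiltonian_of_mem <| by
    rintro (_ | x) <;> simp [hsupp, hp.mem_support]
  refine ⟨.cons hu' q, ⟨(Walk.cons_isCycle_iff _ _).2 ⟨hq, hfirst⟩,
    by simpa [Walk.IsHamiltonian] using hqH⟩, by simp [coe_coneBase], ?_⟩
  rw [← Subgraph.mem_edgeSet, Walk.mem_edges_toSubgraph]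
  simp [hedges]

theorem hamCycleSets_cone [DecidableEq V] (hG : ∀ v, (G.neighborSet v).ncard = 2)
    (hHam : ∀ a b, G.Adj a b → ∃ p : G.Walk a b, p.IsHamiltonian) :
    hamCycleSets (G.cone S) = {D | ∃ a ∈ S, ∃ b ∈ S, G.Adj a b ∧ D = G.apexDetour a b} := by
  ext D
  constructor
  · rintro ⟨u, w, hw, rfl⟩
    have hT := hw.ncard_neighborSet_toSubgraph_eq_two
    obtain ⟨x, y, hxy, hN⟩ := Set.ncard_eq_two.1 (hT none)
    have hx : w.toSubgraph.Adj none x := by rw [← Subgraph.mem_neighborSet, hN]; simp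
    have hy : w.toSubgraph.Adj none y := by rw [← Subgraph.mem_neighborSet, hN]; simp
    have apex_irrefl : ¬w.toSubgraph.Adj none none := fun h =>
      not_cone_adj_none_none (w.toSubgraph.adj_sub h)
    rcases x with _ | a
    · exact absurd hx apex_irrefl
    rcases y with _ | b
    · exact absurd hy apex_irrefl
    have hapex (x : V) :=
      Subgraph.apex_adj_iff_of_ncard_eq_two (x := x) (hT none) hx hy (by simpa using hxy)
    refine ⟨a, w.toSubgraph.adj_sub hx, b, w.toSubgraph.adj_sub hy,
      Subgraph.adj_of_apex_adj_iff hG hT hapex, ?_⟩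
    rw [← Subgraph.edgeSet_eq_apexDetour hG hT hapex, Walk.edgeSet_toSubgraph]
    rfl
  · rintro ⟨a, ha, b, hb, hab, rfl⟩
    obtain ⟨p, hp⟩ := hHam a b hab
    obtain ⟨w, hw, hwa, hwb⟩ := hp.exists_isHamiltonianCycle_cone hab.ne ha hb
    have hT := hw.ncard_neighborSet_toSubgraph_eq_two
    refine ⟨none, w, hw, ?_⟩
    rw [← Subgraph.edgeSet_eq_apexDetour hG hT
      (fun _ => Subgraph.apex_adj_iff_of_ncard_eq_two (hT none) hwa hwb hab.ne),
      Walk.edgeSet_toSubgraph]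
    rfl

section cycleGraph

variable {n : ℕ}

theorem ncard_neighborSet_cycleGraph (v : Fin (n + 3)) :
    ((cycleGraph (n + 3)).neighborSet v).ncard = 2 := by
  rw [← coe_neighborFinset, Set.ncard_coe_finset, card_neighborFinset_eq_degree,
    cycleGraph_degree_three_le]

def cycleGraph.addRight (c : Fin (n + 3)) : cycleGraph (n + 3) →g cycleGraph (n + 3) where
  toFun := (· + c)
  map_rel' := by simp [cycleGraph_adj', add_sub_add_right_eq_sub]

theorem cycleGraph.exists_isHamiltonian_walk_add_one (v : Fin (n + 3)) :
    ∃ p : (cycleGraph (n + 3)).Walk v (v + 1), p.IsHamiltonian := by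
  have hc : (cycleGraph.cycle n).IsHamiltonianCycle :=
    Walk.isHamiltonianCycle_iff_isCycle_and_length_eq.2 ⟨cycleGraph.isCycle_cycle, by simp⟩
  have hlast : (cycleGraph.cycle n).getVert 1 = Fin.last _ := by
    rw [cycleGraph.getVert_cycle (by omega)]
    ext
    simp
  have hstart : cycleGraph.addRight (v + 1) ((cycleGraph.cycle n).getVert 1) = v := by
    change (cycleGraph.cycle n).getVert 1 + (v + 1) = v
    rw [hlast, add_comm v, ← add_assoc, Fin.last_add_one, zero_add]
  refine ⟨((cycleGraph.cycle n).tail.map (cycleGraph.addRight (v + 1))).copy hstart (zero_add _),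
    (Walk.isHamiltonian_copy _ _).2 ?_⟩
  exact hc.isHamiltonian_tail.map _ (Equiv.addRight (v + 1)).bijective

theorem cycleGraph.exists_isHamiltonian_walk_of_adj {a b : Fin (n + 3)}
    (h : (cycleGraph (n + 3)).Adj a b) : ∃ p : (cycleGraph (n + 3)).Walk a b, p.IsHamiltonian := by
  rcases cycleGraph_adj.1 h with h | h
  · obtain ⟨p, hp⟩ := exists_isHamiltonian_walk_add_one b
    exact ⟨(p.copy rfl (sub_eq_iff_eq_add'.1 h).symm).reverse,
      ((Walk.isHamiltonian_copy _ _).2 hp).reverse⟩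
  · obtain ⟨p, hp⟩ := exists_isHamiltonian_walk_add_one a
    exact ⟨p.copy rfl (sub_eq_iff_eq_add'.1 h).symm, (Walk.isHamiltonian_copy _ _).2 hp⟩

theorem cycleGraph.val_add_one_eq_of_adj {a b : Fin (n + 3)} (h : (cycleGraph (n + 3)).Adj a b)
    (ha : a.val ≤ n + 1) (hb : b.val ≤ n + 1) : a.val + 1 = b.val ∨ b.val + 1 = a.val := by
  have hsub (x y : Fin (n + 3)) (hxy : (x - y).val = 1) :
      x.val = y.val + 1 ∨ x.val + n + 2 = y.val := by
    rcases le_or_gt y x with hle | hlt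
    · rw [Fin.coe_sub_iff_le.2 hle] at hxy; omega
    · rw [Fin.coe_sub_iff_lt.2 hlt] at hxy; omega
  rcases cycleGraph_adj'.1 h with h | h <;> have := hsub _ _ h <;> omega

/-- `k ≤ n + 1` keeps the edge between `0` and `Fin.last` out of the arc. -/
theorem ncard_hamCycleSets_cone_cycleGraph {k : ℕ} (hk : k ≤ n + 1) :
    (hamCycleSets ((cycleGraph (n + 3)).cone {v | v.val ≤ k})).ncard = k := by
  rw [hamCycleSets_cone ncard_neighborSet_cycleGraph
    fun _ _ => cycleGraph.exists_isHamiltonian_walk_of_adj]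
  let arc : Fin k → Fin (n + 3) := Fin.castLE (by omega)
  have harc (i : Fin k) : (arc i).val = i.val ∧ (arc i + 1).val = i.val + 1 :=
    ⟨Fin.val_castLE _ _, Fin.val_add_one_of_lt' (by simp [arc]; omega)⟩
  have hsucc (a b : Fin (n + 3)) (hb : b.val ≤ k) (h : a.val + 1 = b.val) :
      ∃ i, (cycleGraph (n + 3)).apexDetour (arc i) (arc i + 1) =
        (cycleGraph (n + 3)).apexDetour a b :=
    ⟨⟨a.val, by omega⟩, by congr 1; ext; simp [harc, h]⟩
  have hrange : {D | ∃ a ∈ {v : Fin (n + 3) | v.val ≤ k}, ∃ b ∈ {v : Fin (n + 3) | v.val ≤ k},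
      (cycleGraph (n + 3)).Adj a b ∧ D = (cycleGraph (n + 3)).apexDetour a b} =
      Set.range fun i => (cycleGraph (n + 3)).apexDetour (arc i) (arc i + 1) := by
    ext D
    constructor
    · rintro ⟨a, ha, b, hb, hab, rfl⟩
      simp only [Set.mem_ofPred_eq] at ha hb
      rcases cycleGraph.val_add_one_eq_of_adj hab (by omega) (by omega) with h | h
      · exact hsucc a b hb h
      · rw [apexDetour_comm]
        exact hsucc b a ha h
    · rintro ⟨i, rfl⟩
      exact ⟨arc i, by simp [harc], arc i + 1, by simp [harc],
        cycleGraph_adj.2 (.inr (add_sub_cancel_left _ _)), rfl⟩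
  rw [hrange, Set.ncard_range_of_injective, Nat.card_eq_fintype_card, Fintype.card_fin]
  intro i j hij
  have hi := congrArg (s(none, some (arc i)) ∈ ·) hij
  have hj := congrArg (s(none, some (arc j)) ∈ ·) hij
  simp only [mk_none_some_mem_apexDetour, true_or, eq_iff_iff, true_iff, iff_true] at hi hj
  simp only [Fin.ext_iff, (harc i).1, (harc i).2, (harc j).1, (harc j).2] at hi hj
  omega

end cycleGraph

end SimpleGraph

open SimpleGraph

/-- For any integers `n ≥ k ≥ 4`, there exists a simple undirected graph on `15n - 27`
vertices containing exactly `k` Hamiltonian cycles (counted as edge sets). -/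
theorem exists_graph_with_k_ham_cycles (n k : ℕ) (hk : 4 ≤ k) (hkn : k ≤ n) :
    ∃ G : SimpleGraph (Fin (15*n - 27)), (hamCycleSets G).ncard = k := by
  obtain ⟨m, hm⟩ : ∃ m, 15 * n - 27 = m + 4 := ⟨15 * n - 31, by omega⟩
  let e : Fin (15 * n - 27) ≃ Option (Fin (m + 3)) := (finCongr hm).trans (finSuccEquiv (m + 3))
  let H := (cycleGraph (m + 3)).cone {v | v.val ≤ k}
  exact ⟨H.comap e,
    (Iso.comap e H).ncard_hamCycleSets_eq.trans (ncard_hamCycleSets_cone_cycleGraph (by omega))⟩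
end
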